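/- arXiv:1711.02576 — 3 statements merged into one kernel-verified Lean document; each statement's English description precedes it below -/
import Mathlib

section
/- Let F be the Frobenius companion matrix of p and let C be a unit sparse companion matrix of p in Hessenberg form. Then N(F) < 2·N(C), and N(F) − N(C) ≤ 1; moreover the latter inequality is strict when a_0 ≠ 0. -/
noncomputable section

/-- Maximum absolute row sum (the `∞`-norm). -/
def infNorm {n : ℕ} (A : Matrix (Fin n) (Fin n) ℂ) : ℝ :=
  ⨆ i, ∑ j, ‖A i j‖

/-- Maximum absolute column sum (the `1`-norm). -/
def oneNorm {n : ℕ} (A : Matrix (Fin n) (Fin n) ℂ) : ℝ :=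
  ⨆ j, ∑ i, ‖A i j‖

/-- `N(A) = min {‖A‖_∞, ‖A‖_1}`. -/
def NN {n : ℕ} (A : Matrix (Fin n) (Fin n) ℂ) : ℝ :=
  min (infNorm A) (oneNorm A)

/-- The monic polynomial `p(x) = x^n + a_{n-1}x^{n-1} + ⋯ + a_1 x + a_0`. -/
def pPoly (n : ℕ) (a : ℕ → ℂ) : Polynomial ℂ :=
  Polynomial.X ^ n + ∑ k ∈ Finset.range n, Polynomial.C (a k) * Polynomial.X ^ k

/-- Coefficients of the monic reversal polynomial `p♯`:
`asharp n a k` is the coefficient of `x^k` in `p♯`, namely `1/a_0` for `k = 0`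
and `a_{n-k}/a_0` for `1 ≤ k ≤ n-1`. -/
def asharp (n : ℕ) (a : ℕ → ℂ) : ℕ → ℂ :=
  fun k => if k = 0 then 1 / a 0 else a (n - k) / a 0

/-- A unit sparse companion matrix of `p` in Hessenberg form, with explicit data:
`m` (0-based; `m + 1 ≤ n`), and 0-based positions `(r k, c k)` (for `k = 0, …, n-1`)
satisfying `r k - c k = k`, `m ≤ r k ≤ n-1`, `0 ≤ c k ≤ m`; the superdiagonal
entries are `1`, the entry at `(r k, c k)` is `-a_{n-1-k}`, and all other entries
are `0`.  (This is the 0-based translation of the 1-based description.) -/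
def IsUnitSparseData (n m : ℕ) (a : ℕ → ℂ) (C : Matrix (Fin n) (Fin n) ℂ)
    (r c : Fin n → Fin n) : Prop :=
  m + 1 ≤ n ∧
  (∀ k : Fin n, (r k : ℕ) = (c k : ℕ) + (k : ℕ)) ∧
  (∀ k : Fin n, m ≤ (r k : ℕ)) ∧
  (∀ k : Fin n, (c k : ℕ) ≤ m) ∧
  (∀ k : Fin n, C (r k) (c k) = -a (n - 1 - (k : ℕ))) ∧
  (∀ i j : Fin n, (j : ℕ) = (i : ℕ) + 1 → C i j = 1) ∧
  (∀ i j : Fin n, (j : ℕ) ≠ (i : ℕ) + 1 →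
    (∀ k : Fin n, ¬(r k = i ∧ c k = j)) → C i j = 0)

/-- A unit sparse companion matrix of `p` in Hessenberg form. -/
def IsUnitSparse (n : ℕ) (a : ℕ → ℂ) (C : Matrix (Fin n) (Fin n) ℂ) : Prop :=
  ∃ (m : ℕ) (r c : Fin n → Fin n), IsUnitSparseData n m a C r c

/-- A Fiedler companion matrix of `p` in Hessenberg form (with explicit position
data): a unit sparse companion matrix such that for `1 ≤ k ≤ n-1`, if `-a_{k-1}`
occupies position `(i,j)` then `-a_k` occupies position `(i-1,j)` or `(i,j+1)`.
Here the coefficient `-a_{n-1-k}` sits at position index `k`, so the coefficient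
`-a_{k-1}` has index `k' = n-k` and `-a_k` has index `n-1-k = k' - 1`. -/
def IsFiedlerData (n m : ℕ) (a : ℕ → ℂ) (C : Matrix (Fin n) (Fin n) ℂ)
    (r c : Fin n → Fin n) : Prop :=
  IsUnitSparseData n m a C r c ∧
  ∀ k k' : Fin n, (k' : ℕ) = (k : ℕ) + 1 →
    ((r k : ℕ) + 1 = (r k' : ℕ) ∧ c k = c k') ∨
    (r k = r k' ∧ (c k : ℕ) = (c k' : ℕ) + 1)

/-- The Frobenius companion matrix of the monic polynomial with coefficients `a`
(0-based: superdiagonal `1`'s and last row `-a_0, -a_1, …, -a_{n-1}`). -/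
def Frob (n : ℕ) (a : ℕ → ℂ) : Matrix (Fin n) (Fin n) ℂ :=
  Matrix.of fun i j =>
    if (j : ℕ) = (i : ℕ) + 1 then 1
    else if (i : ℕ) = n - 1 then -a (j : ℕ)
    else 0

/-- The Fiedler companion matrix `L_b` (0-based translation): superdiagonal `1`'s,
`(L_b)_{i,b} = -a_{n+b-1-i}` for `b ≤ i ≤ n-2`, and `(L_b)_{n-1,j} = -a_j` for
`0 ≤ j ≤ b`; all other entries `0`. -/
def Lmat (n b : ℕ) (a : ℕ → ℂ) : Matrix (Fin n) (Fin n) ℂ :=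
  Matrix.of fun i j =>
    if (j : ℕ) = (i : ℕ) + 1 then 1
    else if (i : ℕ) = n - 1 ∧ (j : ℕ) ≤ b then -a (j : ℕ)
    else if (j : ℕ) = b ∧ b ≤ (i : ℕ) ∧ (i : ℕ) + 2 ≤ n then -a (n + b - 1 - (i : ℕ))
    else 0

/-- The matrix `W` (0-based translation): `W_{0,0} = -a_{n-1}`, `W_{0,n-1} = -a_0`,
`W_{i,i-1} = 1` for `1 ≤ i ≤ n-1`, `W_{i,0} = a_{i-1}/a_0` for `2 ≤ i ≤ n-1`;
all other entries `0`. -/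
def Wmat (n : ℕ) (a : ℕ → ℂ) : Matrix (Fin n) (Fin n) ℂ :=
  Matrix.of fun i j =>
    if (i : ℕ) = 0 ∧ (j : ℕ) = 0 then -a (n - 1)
    else if (i : ℕ) = 0 ∧ (j : ℕ) = n - 1 then -a 0
    else if (i : ℕ) = (j : ℕ) + 1 then 1
    else if 2 ≤ (i : ℕ) ∧ (j : ℕ) = 0 then a ((i : ℕ) - 1) / a 0
    else 0

/-- The matrix `X_b` (0-based translation): `(X_b)_{0,j} = -a_{n-1-j}` for
`0 ≤ j ≤ n-2-b`, `(X_b)_{0,n-1} = -a_0`, `(X_b)_{i,i-1} = 1` for `1 ≤ i ≤ n-2`,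
`(X_b)_{n-1,n-2} = 1`, `(X_b)_{n-1,j} = a_{n-2-j}/a_0` for `n-2-b ≤ j ≤ n-3`;
all other entries `0`. -/
def Xmat (n b : ℕ) (a : ℕ → ℂ) : Matrix (Fin n) (Fin n) ℂ :=
  Matrix.of fun i j =>
    if (i : ℕ) = 0 ∧ (j : ℕ) + b ≤ n - 2 then -a (n - 1 - (j : ℕ))
    else if (i : ℕ) = 0 ∧ (j : ℕ) = n - 1 then -a 0
    else if (i : ℕ) = (j : ℕ) + 1 ∧ (i : ℕ) + 2 ≤ n then 1
    else if (i : ℕ) = n - 1 ∧ (j : ℕ) = n - 2 then 1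
    else if (i : ℕ) = n - 1 ∧ n - 2 ≤ (j : ℕ) + b ∧ (j : ℕ) + 3 ≤ n then
      a (n - 2 - (j : ℕ)) / a 0
    else 0

/-- A matrix `E` of type `E_c(q)` for the monic polynomial with coefficients `b`
(0-based translation of the 1-based description): superdiagonal `1`'s,
`E_{n-1,0} = -b_0`, and positions `(r k, col k)` for `k = 0, …, n-2` with
`r k = col k + k`, `c ≤ r k`, `1 ≤ col k ≤ c`, holding `-b_{n-1-k}`; all other
entries `0`. -/
def IsTypeE (n c : ℕ) (b : ℕ → ℂ) (E : Matrix (Fin n) (Fin n) ℂ) : Prop :=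
  ∃ r col : ℕ → Fin n,
    (∀ k : ℕ, k ≤ n - 2 → (r k : ℕ) = (col k : ℕ) + k) ∧
    (∀ k : ℕ, k ≤ n - 2 → c ≤ (r k : ℕ)) ∧
    (∀ k : ℕ, k ≤ n - 2 → 1 ≤ (col k : ℕ) ∧ (col k : ℕ) ≤ c) ∧
    (∀ k : ℕ, k ≤ n - 2 → E (r k) (col k) = -b (n - 1 - k)) ∧
    (∀ i j : Fin n, (j : ℕ) = (i : ℕ) + 1 → E i j = 1) ∧
    (∀ i j : Fin n, (i : ℕ) = n - 1 → (j : ℕ) = 0 → E i j = -b 0) ∧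
    (∀ i j : Fin n, (j : ℕ) ≠ (i : ℕ) + 1 → ¬((i : ℕ) = n - 1 ∧ (j : ℕ) = 0) →
      (∀ k : ℕ, k ≤ n - 2 → ¬(r k = i ∧ col k = j)) → E i j = 0)

/-- `A` is of type `E_c(p♯)⁻¹`: `A = E⁻¹` for some `E` of type `E_c(p♯)`. -/
def IsTypeEInv (n c : ℕ) (a : ℕ → ℂ) (A : Matrix (Fin n) (Fin n) ℂ) : Prop :=
  ∃ E : Matrix (Fin n) (Fin n) ℂ, IsTypeE n c (asharp n a) E ∧ A = E⁻¹

/-!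
Only three features of `C` matter: the ones on its superdiagonal, and each coefficient `-a_j`
sitting at some position `(r_j, c_j)` of the `(n-1-j)`-th subdiagonal. Hence `|a_j| ≤ N(C)` and
`1 ≤ N(C)`. For `j ≥ 1` the row of `-a_j` also contains a superdiagonal one or, if it is the last
row, `-a_0`, so `|a_j| + min(1, |a_0|) ≤ ‖C‖_∞`; and if `‖C‖_∞ ≤ 1` all coefficients outside the
last row vanish, so `Σ|a_j| ≤ 1`. Columns reduce to rows through the anti-transpose, which maps
such a pattern to another one. Since `‖F‖_∞ = max(1, Σ|a_j|)` and
`‖F‖_1 ≤ max(|a_0|, 1 + max_{j≥1} |a_j|)`, this gives `N(F) ≤ 1 + N(C)`, strictly if `a_0 ≠ 0`,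
and `N(F) < 2 N(C)` follows by distinguishing `Σ|a_j| ≤ 1` from `1 < N(C)`.
-/

section Norms

variable {n : ℕ} (A : Matrix (Fin n) (Fin n) ℂ)

lemma sum_row_le_infNorm (i : Fin n) : ∑ j, ‖A i j‖ ≤ infNorm A :=
  le_ciSup (f := fun i => ∑ j, ‖A i j‖) (Set.finite_range _).bddAbove i

lemma infNorm_le {x : ℝ} (h : ∀ i, ∑ j, ‖A i j‖ ≤ x) (hx : 0 ≤ x) : infNorm A ≤ x :=
  Real.iSup_le h hx

lemma oneNorm_le {x : ℝ} (h : ∀ j, ∑ i, ‖A i j‖ ≤ x) (hx : 0 ≤ x) : oneNorm A ≤ x :=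
  Real.iSup_le h hx

def antitranspose : Matrix (Fin n) (Fin n) ℂ := Matrix.of fun i j => A j.rev i.rev

lemma oneNorm_eq_infNorm_antitranspose : oneNorm A = infNorm (antitranspose A) := by
  rw [oneNorm, infNorm, ← Fin.revPerm.iSup_comp (g := fun j => ∑ i, ‖A i j‖)]
  refine congrArg iSup (funext fun j => ?_)
  rw [← Equiv.sum_comp Fin.revPerm]
  simp [antitranspose]

end Norms

lemma sum_ite_le_of_subsingleton {n : ℕ} {p : Fin n → Prop} [DecidablePred p]
    (hp : ∀ i j, p i → p j → i = j) {x : ℝ} (hx : 0 ≤ x) :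
    ∑ i, (if p i then x else 0) ≤ x := by
  rw [Finset.sum_ite, Finset.sum_const_zero, add_zero, Finset.sum_const, nsmul_eq_mul]
  have : (Finset.univ.filter p).card ≤ 1 :=
    Finset.card_le_one.mpr fun i hi j hj =>
      hp i j (Finset.mem_filter.mp hi).2 (Finset.mem_filter.mp hj).2
  nlinarith [show ((Finset.univ.filter p).card : ℝ) ≤ 1 by exact_mod_cast this]

section Frobenius

variable {n : ℕ} (a : ℕ → ℂ)

lemma infNorm_frob_le : infNorm (Frob n a) ≤ max 1 (∑ j : Fin n, ‖a j‖) := by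
  refine infNorm_le _ (fun i => ?_) (le_max_of_le_left zero_le_one)
  by_cases hi : (i : ℕ) = n - 1
  · refine le_max_of_le_right (le_of_eq (Finset.sum_congr rfl fun j _ => ?_))
    have : (j : ℕ) ≠ n - 1 + 1 := by omega
    simp [Frob, this, hi]
  · refine le_max_of_le_left (le_trans (le_of_eq (Finset.sum_congr rfl fun j _ => ?_))
      (sum_ite_le_of_subsingleton (p := fun j : Fin n => (j : ℕ) = i + 1)
        (fun j j' hj hj' => Fin.ext (hj.trans hj'.symm)) zero_le_one))
    by_cases hj : (j : ℕ) = i + 1 <;> simp [Frob, hj, hi]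

lemma oneNorm_frob_le {B : ℝ} (hB : ∀ j : Fin n, 1 ≤ (j : ℕ) → ‖a j‖ ≤ B) :
    oneNorm (Frob n a) ≤ max ‖a 0‖ (1 + B) := by
  refine oneNorm_le _ (fun j => ?_) (le_max_of_le_left (norm_nonneg _))
  have hlast := sum_ite_le_of_subsingleton (p := fun i : Fin n => (i : ℕ) = n - 1)
    (fun i i' hi hi' => Fin.ext (hi.trans hi'.symm)) (norm_nonneg (a j))
  by_cases hj : (j : ℕ) = 0
  · refine le_max_of_le_left
      (le_trans (le_of_eq (Finset.sum_congr rfl fun i _ => ?_)) (hj ▸ hlast))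
    by_cases hi : (i : ℕ) = n - 1 <;> simp [Frob, hj, hi]
  · have hsup := sum_ite_le_of_subsingleton (p := fun i : Fin n => (j : ℕ) = i + 1)
      (fun i i' hi hi' => Fin.ext (by omega)) zero_le_one
    refine le_max_of_le_right ?_
    calc ∑ i, ‖Frob n a i j‖
        ≤ ∑ i : Fin n, ((if (j : ℕ) = i + 1 then 1 else 0) +
            (if (i : ℕ) = n - 1 then ‖a j‖ else 0)) := by
          refine Finset.sum_le_sum fun i _ => ?_
          have : (j : ℕ) ≠ n - 1 + 1 := by omega
          by_cases h1 : (j : ℕ) = i + 1 <;> by_cases h2 : (i : ℕ) = n - 1 <;>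
            simp [Frob, h1, h2, this]
      _ ≤ 1 + B := by
          rw [Finset.sum_add_distrib]
          linarith [hB j (by omega)]

end Frobenius

structure IsCompanionPattern {n : ℕ} (a : ℕ → ℂ) (C : Matrix (Fin n) (Fin n) ℂ)
    (r c : Fin n → Fin n) : Prop where
  val_row : ∀ j, (r j : ℕ) = c j + (n - 1 - j)
  apply_eq : ∀ j, C (r j) (c j) = -a j
  apply_superdiag : ∀ i j : Fin n, (j : ℕ) = i + 1 → C i j = 1

namespace IsCompanionPattern

variable {n : ℕ} {a : ℕ → ℂ} {C : Matrix (Fin n) (Fin n) ℂ} {r c : Fin n → Fin n}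
  (P : IsCompanionPattern a C r c)
include P

lemma norm_coeff_le_infNorm (j : Fin n) : ‖a j‖ ≤ infNorm C :=
  calc ‖a j‖ = ‖C (r j) (c j)‖ := by rw [P.apply_eq, norm_neg]
    _ ≤ ∑ k, ‖C (r j) k‖ := Finset.single_le_sum (fun _ _ => norm_nonneg _) (Finset.mem_univ _)
    _ ≤ infNorm C := sum_row_le_infNorm C _

lemma one_le_infNorm (hn : 2 ≤ n) : 1 ≤ infNorm C :=
  calc (1 : ℝ) = ‖C ⟨0, by omega⟩ ⟨1, by omega⟩‖ := by rw [P.apply_superdiag _ _ rfl, norm_one]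
    _ ≤ ∑ k, ‖C ⟨0, by omega⟩ k‖ :=
        Finset.single_le_sum (fun _ _ => norm_nonneg _) (Finset.mem_univ _)
    _ ≤ infNorm C := sum_row_le_infNorm C _

lemma one_add_norm_coeff_le_sum_row (j : Fin n) (hj : (r j : ℕ) + 1 < n) :
    1 + ‖a j‖ ≤ ∑ k, ‖C (r j) k‖ := by
  have hne : (⟨r j + 1, hj⟩ : Fin n) ≠ c j := by
    have := P.val_row j
    exact Fin.ne_of_val_ne (show (r j : ℕ) + 1 ≠ c j by omega)
  calc 1 + ‖a j‖ = ‖C (r j) ⟨r j + 1, hj⟩‖ + ‖C (r j) (c j)‖ := by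
        rw [P.apply_superdiag _ _ rfl, P.apply_eq, norm_one, norm_neg]
    _ ≤ ∑ k, ‖C (r j) k‖ :=
        Finset.add_le_sum (fun _ _ => norm_nonneg _) (Finset.mem_univ _) (Finset.mem_univ _) hne

lemma sum_norm_coeff_le_sum_row (i : Fin n) :
    ∑ j ∈ Finset.univ.filter (r · = i), ‖a j‖ ≤ ∑ k, ‖C i k‖ := by
  have hinj : Set.InjOn c (Finset.univ.filter (r · = i)) := by
    intro j hj j' hj' hc
    simp only [Finset.coe_filter, Finset.mem_univ, true_and] at hj hj'
    have := P.val_row j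
    have := P.val_row j'
    have := congrArg Fin.val hc
    have := congrArg Fin.val (hj.trans hj'.symm)
    omega
  calc ∑ j ∈ Finset.univ.filter (r · = i), ‖a j‖
      = ∑ j ∈ Finset.univ.filter (r · = i), ‖C i (c j)‖ :=
        Finset.sum_congr rfl fun j hj => by
          rw [← (Finset.mem_filter.mp hj).2, P.apply_eq, norm_neg]
    _ = ∑ k ∈ (Finset.univ.filter (r · = i)).image c, ‖C i k‖ :=
        (Finset.sum_image (f := fun k => ‖C i k‖) hinj).symm
    _ ≤ ∑ k, ‖C i k‖ :=
        Finset.sum_le_sum_of_subset_of_nonneg (Finset.subset_univ _) fun _ _ _ => norm_nonneg _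

lemma val_row_zero (hn : 0 < n) : (r ⟨0, hn⟩ : ℕ) = n - 1 := by
  have h := P.val_row ⟨0, hn⟩
  have := (r ⟨0, hn⟩).isLt
  simp only at h
  omega

lemma norm_coeff_add_min_le_infNorm (j : Fin n) (hj : (j : ℕ) ≠ 0) :
    ‖a j‖ + min 1 ‖a 0‖ ≤ infNorm C := by
  by_cases hr : (r j : ℕ) + 1 < n
  · linarith [P.one_add_norm_coeff_le_sum_row j hr, min_le_left 1 ‖a 0‖,
      sum_row_le_infNorm C (r j)]
  · have hn : 0 < n := by omega
    have hr0 : r ⟨0, hn⟩ = r j := Fin.ext (by rw [P.val_row_zero hn]; omega)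
    calc ‖a j‖ + min 1 ‖a 0‖ ≤ ‖a j‖ + ‖a (⟨0, hn⟩ : Fin n)‖ := by
          gcongr; exact min_le_right _ _
      _ ≤ ∑ j' ∈ Finset.univ.filter (r · = r j), ‖a j'‖ :=
          Finset.add_le_sum (f := fun j' : Fin n => ‖a j'‖) (fun _ _ => norm_nonneg _) (by simp)
            (by simp [hr0]) (Fin.ne_of_val_ne hj)
      _ ≤ infNorm C := (P.sum_norm_coeff_le_sum_row _).trans (sum_row_le_infNorm C _)

lemma sum_norm_coeff_le_one (h : infNorm C ≤ 1) : ∑ j : Fin n, ‖a j‖ ≤ 1 := by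
  rcases n.eq_zero_or_pos with rfl | hn
  · simp
  set i₀ : Fin n := r ⟨0, hn⟩
  have hoff : ∀ j ∈ Finset.univ.filter (¬r · = i₀), ‖a j‖ = 0 := fun j hj => by
    have hr : (r j : ℕ) + 1 < n := by
      have := Fin.val_ne_of_ne (Finset.mem_filter.mp hj).2
      have := (r j).isLt
      have := P.val_row_zero hn
      omega
    linarith [P.one_add_norm_coeff_le_sum_row j hr, sum_row_le_infNorm C (r j), norm_nonneg (a j)]
  rw [← Finset.sum_filter_add_sum_filter_not _ (r · = i₀), Finset.sum_eq_zero hoff, add_zero]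
  exact (P.sum_norm_coeff_le_sum_row i₀).trans ((sum_row_le_infNorm C i₀).trans h)

lemma antitranspose : IsCompanionPattern a (antitranspose C) (Fin.rev ∘ c) (Fin.rev ∘ r) where
  val_row j := by
    have := P.val_row j
    have := (r j).isLt
    simp only [Function.comp_apply, Fin.val_rev]
    omega
  apply_eq j := by simp [_root_.antitranspose, P.apply_eq]
  apply_superdiag i j hij := P.apply_superdiag _ _ (by simp only [Fin.val_rev]; omega)

lemma norm_coeff_le_NN (j : Fin n) : ‖a j‖ ≤ NN C :=
  le_min (P.norm_coeff_le_infNorm j)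
    (oneNorm_eq_infNorm_antitranspose C ▸ P.antitranspose.norm_coeff_le_infNorm j)

lemma one_le_NN (hn : 2 ≤ n) : 1 ≤ NN C :=
  le_min (P.one_le_infNorm hn)
    (oneNorm_eq_infNorm_antitranspose C ▸ P.antitranspose.one_le_infNorm hn)

lemma norm_coeff_add_min_le_NN (j : Fin n) (hj : (j : ℕ) ≠ 0) :
    ‖a j‖ + min 1 ‖a 0‖ ≤ NN C :=
  le_min (P.norm_coeff_add_min_le_infNorm j hj)
    (oneNorm_eq_infNorm_antitranspose C ▸ P.antitranspose.norm_coeff_add_min_le_infNorm j hj)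

lemma one_lt_NN (h : 1 < ∑ j : Fin n, ‖a j‖) : 1 < NN C :=
  lt_min (lt_of_not_ge fun h' => h.not_ge (P.sum_norm_coeff_le_one h'))
    (lt_of_not_ge fun h' => h.not_ge (P.antitranspose.sum_norm_coeff_le_one
      (oneNorm_eq_infNorm_antitranspose C ▸ h')))

end IsCompanionPattern

lemma IsUnitSparseData.isCompanionPattern {n m : ℕ} {a : ℕ → ℂ} {C : Matrix (Fin n) (Fin n) ℂ}
    {r c : Fin n → Fin n} (h : IsUnitSparseData n m a C r c) :
    IsCompanionPattern a C (r ∘ Fin.rev) (c ∘ Fin.rev) := by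
  obtain ⟨-, hrc, -, -, hval, hsup, -⟩ := h
  refine ⟨fun j => ?_, fun j => ?_, hsup⟩
  · have := hrc j.rev
    simp only [Function.comp_apply, Fin.val_rev] at this ⊢
    omega
  · have := hval j.rev
    rwa [Fin.val_rev, show n - 1 - (n - (j + 1)) = j by omega] at this

/-- for any unit sparse companion matrix `C` of `p`,
`N(F) < 2·N(C)` and `N(F) - N(C) ≤ 1`, the latter strictly when `a_0 ≠ 0`. -/
theorem stmt5 (n : ℕ) (hn : 2 ≤ n) (a : ℕ → ℂ) (C : Matrix (Fin n) (Fin n) ℂ)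
    (hC : IsUnitSparse n a C) :
    NN (Frob n a) < 2 * NN C ∧ NN (Frob n a) - NN C ≤ 1 ∧
      (a 0 ≠ 0 → NN (Frob n a) - NN C < 1) := by
  obtain ⟨m, r, c, hdata⟩ := hC
  have P := hdata.isCompanionPattern
  have ha0 : ‖a 0‖ ≤ NN C := P.norm_coeff_le_NN ⟨0, by omega⟩
  have hF : NN (Frob n a) ≤ 1 + NN C :=
    (min_le_right _ _).trans <| (oneNorm_frob_le a fun j _ => P.norm_coeff_le_NN j).trans <|
      max_le (by linarith) le_rfl
  refine ⟨?_, by linarith, fun h0 => ?_⟩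
  · by_cases hS : ∑ j : Fin n, ‖a j‖ ≤ 1
    · have : NN (Frob n a) ≤ 1 :=
        (min_le_left _ _).trans <| (infNorm_frob_le a).trans (max_le le_rfl hS)
      linarith [P.one_le_NN hn]
    · linarith [P.one_lt_NN (not_le.mp hS)]
  · have hδ : 0 < min 1 ‖a 0‖ := lt_min one_pos (norm_pos_iff.mpr h0)
    have : NN (Frob n a) ≤ max ‖a 0‖ (1 + (NN C - min 1 ‖a 0‖)) :=
      (min_le_right _ _).trans <| oneNorm_frob_le a fun j hj => by
        linarith [P.norm_coeff_add_min_le_NN j (by omega)]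
    have : max ‖a 0‖ (1 + (NN C - min 1 ‖a 0‖)) < 1 + NN C :=
      max_lt (by linarith) (by linarith)
    linarith
end
end

section
/- Let r = max{k ∈ {0, 1, …, n−1} : Σ_{i=0}^{k−1} |a_i| < 1}, where the empty sum for k = 0 is 0 (so r is well defined, and r = 0 when |a_0| ≥ 1). Then ‖L_r‖_∞ ≤ ‖L_b‖_∞ for all b ∈ {0, 1, …, n−2}. -/
noncomputable section

/-! The row sums of `L_b` are `1` (rows `i < b`), `1 + ‖a k‖` for `b < k < n`
(the entries of column `b`) and `∑_{j ≤ b} ‖a j‖` (last row). Every row sum of `L_r` is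
dominated by one of `L_b`. A coefficient `a k` of column `r` with `k ≤ b` is absorbed by the
last row of `L_b`, because `∑_{i < k} ‖a i‖ ≥ 1` whenever `k > r`. If `b < r`, the last row of
`L_r` sums to `∑_{i < r} ‖a i‖ + ‖a r‖ < 1 + ‖a r‖`, a row sum of `L_b`. -/

lemma sum_norm_le_infNorm {n : ℕ} (A : Matrix (Fin n) (Fin n) ℂ) (i : Fin n) :
    ∑ j, ‖A i j‖ ≤ infNorm A :=
  le_ciSup (f := fun i => ∑ j, ‖A i j‖) (Set.finite_range _).bddAbove i

lemma monotone_sum_range_norm {E : Type*} [SeminormedAddGroup E] (a : ℕ → E) :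
    Monotone fun k => ∑ i ∈ Finset.range k, ‖a i‖ := fun _ _ h =>
  Finset.sum_le_sum_of_subset_of_nonneg (Finset.range_subset_range.mpr h) fun _ _ _ => norm_nonneg _

lemma one_add_norm_le_sum_range {E : Type*} [SeminormedAddGroup E] (a : ℕ → E) {k b : ℕ}
    (hkb : k ≤ b) (hk : 1 ≤ ∑ i ∈ Finset.range k, ‖a i‖) :
    1 + ‖a k‖ ≤ ∑ i ∈ Finset.range (b + 1), ‖a i‖ :=
  calc 1 + ‖a k‖ ≤ ∑ i ∈ Finset.range (k + 1), ‖a i‖ := by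
        rw [Finset.sum_range_succ]; linarith
    _ ≤ _ := monotone_sum_range_norm a (Nat.succ_le_succ hkb)

section Lmat

variable {n b : ℕ} (a : ℕ → ℂ)

lemma sum_norm_Lmat_of_lt (i : Fin n) (hib : (i : ℕ) < b) (hb : b < n) :
    ∑ j, ‖Lmat n b a i j‖ = 1 := by
  rw [Fintype.sum_eq_single ⟨i + 1, by omega⟩ fun j hj => ?_]
  · simp [Lmat]
  · have hj' : (j : ℕ) ≠ i + 1 := fun h => hj (Fin.ext h)
    simp [Lmat, hj', show (i : ℕ) ≠ n - 1 by omega, show ¬b ≤ (i : ℕ) by omega]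

lemma sum_norm_Lmat_of_le (i : Fin n) (hbi : b ≤ (i : ℕ)) (hin : (i : ℕ) + 2 ≤ n) :
    ∑ j, ‖Lmat n b a i j‖ = 1 + ‖a (n + b - 1 - i)‖ := by
  have hne : (⟨i + 1, by omega⟩ : Fin n) ≠ ⟨b, by omega⟩ := by simp; omega
  rw [Fintype.sum_eq_add _ _ hne fun j ⟨hj, hj'⟩ => ?_]
  · simp [Lmat, show (i : ℕ) ≠ n - 1 by omega, show b ≠ i + 1 by omega, hbi, hin]
  · have h1 : (j : ℕ) ≠ i + 1 := fun h => hj (Fin.ext h)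
    have h2 : (j : ℕ) ≠ b := fun h => hj' (Fin.ext h)
    simp [Lmat, h1, h2, show (i : ℕ) ≠ n - 1 by omega]

lemma sum_norm_Lmat_last (hb : b < n) :
    ∑ j, ‖Lmat n b a ⟨n - 1, by omega⟩ j‖ = ∑ j ∈ Finset.range (b + 1), ‖a j‖ := by
  have hrow : ∀ j : Fin n,
      ‖Lmat n b a ⟨n - 1, by omega⟩ j‖ = if (j : ℕ) ≤ b then ‖a j‖ else 0 := fun j => by
    split_ifs with hjb <;>
      simp [Lmat, show (j : ℕ) ≠ n - 1 + 1 by omega, show ¬n - 1 + 2 ≤ n by omega, hjb]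
  rw [Fintype.sum_congr _ _ hrow, Fin.sum_univ_eq_sum_range (fun j => if j ≤ b then ‖a j‖ else 0),
    ← Finset.sum_filter]
  congr 1
  ext j
  simp only [Finset.mem_filter, Finset.mem_range]
  omega

lemma sum_norm_Lmat_cases (hb : b < n) (i : Fin n) :
    ∑ j, ‖Lmat n b a i j‖ = 1 ∨
      (∃ k, b < k ∧ k < n ∧ ∑ j, ‖Lmat n b a i j‖ = 1 + ‖a k‖) ∨
      ∑ j, ‖Lmat n b a i j‖ = ∑ j ∈ Finset.range (b + 1), ‖a j‖ := by
  by_cases hib : (i : ℕ) < b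
  · exact Or.inl (sum_norm_Lmat_of_lt a i hib hb)
  by_cases hin : (i : ℕ) + 2 ≤ n
  · exact Or.inr (Or.inl ⟨n + b - 1 - i, by omega, by omega,
      sum_norm_Lmat_of_le a i (by omega) hin⟩)
  · rw [show i = ⟨n - 1, by omega⟩ from Fin.ext (by simp; omega)]
    exact Or.inr (Or.inr (sum_norm_Lmat_last a hb))

lemma one_add_norm_le_infNorm_Lmat {k : ℕ} (hbk : b < k) (hkn : k < n) :
    1 + ‖a k‖ ≤ infNorm (Lmat n b a) := by
  have h := sum_norm_Lmat_of_le a (n := n) (b := b) ⟨n + b - 1 - k, by omega⟩ (by simp; omega)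
    (by simp; omega)
  rw [show n + b - 1 - (n + b - 1 - k) = k by omega] at h
  exact h ▸ sum_norm_le_infNorm _ _

lemma sum_range_le_infNorm_Lmat (hb : b < n) :
    ∑ j ∈ Finset.range (b + 1), ‖a j‖ ≤ infNorm (Lmat n b a) :=
  sum_norm_Lmat_last a hb ▸ sum_norm_le_infNorm _ _

end Lmat

/-- with `r = max{k ∈ {0, …, n-1} : Σ_{i<k} |a_i| < 1}`,
`‖L_r‖_∞ ≤ ‖L_b‖_∞` for all `b ∈ {0, …, n-2}`. -/
theorem stmt7 (n : ℕ) (hn : 2 ≤ n) (a : ℕ → ℂ) (r : ℕ)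
    (hr1 : r ≤ n - 1)
    (hr2 : ∑ i ∈ Finset.range r, ‖a i‖ < 1)
    (hr3 : ∀ k : ℕ, k ≤ n - 1 → (∑ i ∈ Finset.range k, ‖a i‖) < 1 → k ≤ r) :
    ∀ b : ℕ, b ≤ n - 2 → infNorm (Lmat n r a) ≤ infNorm (Lmat n b a) := by
  intro b hb
  have : Nonempty (Fin n) := ⟨⟨0, by omega⟩⟩
  refine ciSup_le fun i => ?_
  rcases sum_norm_Lmat_cases (b := r) a (by omega) i with h | ⟨k, hrk, hkn, h⟩ | h <;> rw [h]
  · calc (1 : ℝ) ≤ 1 + ‖a (n - 1)‖ := le_add_of_nonneg_right (norm_nonneg _)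
      _ ≤ _ := one_add_norm_le_infNorm_Lmat a (k := n - 1) (by omega) (by omega)
  · rcases lt_or_ge b k with hbk | hkb
    · exact one_add_norm_le_infNorm_Lmat a hbk hkn
    have hk : 1 ≤ ∑ i ∈ Finset.range k, ‖a i‖ := not_lt.mp fun hk => by
      have := hr3 k (by omega) hk; omega
    exact (one_add_norm_le_sum_range a hkb hk).trans (sum_range_le_infNorm_Lmat a (by omega))
  · rcases le_or_gt r b with hrb | hbr
    · exact (monotone_sum_range_norm a (Nat.succ_le_succ hrb)).trans
        (sum_range_le_infNorm_Lmat a (by omega))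
    · calc ∑ j ∈ Finset.range (r + 1), ‖a j‖ = ∑ j ∈ Finset.range r, ‖a j‖ + ‖a r‖ :=
            Finset.sum_range_succ _ _
        _ ≤ 1 + ‖a r‖ := by linarith
        _ ≤ _ := one_add_norm_le_infNorm_Lmat a hbr (by omega)

end
end

section
/- Suppose |a_0| = 1. Then N(F(p)) ≤ N(C) for every unit sparse companion matrix C of p in Hessenberg form, and N(F(p♯)) ≤ N(D) for every unit sparse companion matrix D of the monic reversal polynomial p♯ in Hessenberg form; that is, among all unit sparse companion matrices, the Frobenius companion matrix provides both the sharpest upper bound N(C(p)) and the sharpest lower bound 1/N(C(p♯)) on the modulus of a root of p. -/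
noncomputable section

/-! Column `j ≥ 1` of `F(p)` has absolute sum `1 + |a_j|`, column `0` has sum `|a_0| = 1`.
In a unit sparse companion matrix `C` the entry `-a_j` sits at some `(r, c)` with `c ≤ r`.
Its row also contains a unit entry: the superdiagonal `1` at `(r, r + 1)`, or, when `r` is the
last row, the entry `-a_0` at `(n - 1, 0)`. Dually its column contains the superdiagonal `1` at
`(c - 1, c)`, or `-a_0` when `c = 0`. Hence every column sum of `F(p)` is bounded by both a row
sum and a column sum of `C`, so `N(F(p)) ≤ ‖F(p)‖_1 ≤ N(C)`. Since `|1/a_0| = 1`, the same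
applies to `p♯`. -/

section Norms

open scoped Matrix

variable {n : ℕ} {A : Matrix (Fin n) (Fin n) ℂ}

lemma sum_norm_row_le_infNorm (A : Matrix (Fin n) (Fin n) ℂ) (i : Fin n) :
    ∑ j, ‖A i j‖ ≤ infNorm A :=
  le_ciSup (f := fun i => ∑ j, ‖A i j‖) (Set.finite_range _).bddAbove i

lemma norm_le_infNorm (i j : Fin n) : ‖A i j‖ ≤ infNorm A :=
  (Finset.single_le_sum (fun j _ => norm_nonneg (A i j)) (Finset.mem_univ j)).trans
    (sum_norm_row_le_infNorm A i)

lemma add_norm_le_infNorm {i j j' : Fin n} (h : j ≠ j') :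
    ‖A i j‖ + ‖A i j'‖ ≤ infNorm A := by
  rw [← Finset.sum_pair (f := fun j => ‖A i j‖) h]
  exact (Finset.sum_le_sum_of_subset_of_nonneg (Finset.subset_univ _)
    fun _ _ _ => norm_nonneg _).trans (sum_norm_row_le_infNorm A i)

lemma norm_le_oneNorm (i j : Fin n) : ‖A i j‖ ≤ oneNorm A :=
  norm_le_infNorm (A := Aᵀ) j i

lemma add_norm_le_oneNorm {i i' j : Fin n} (h : i ≠ i') :
    ‖A i j‖ + ‖A i' j‖ ≤ oneNorm A :=
  add_norm_le_infNorm (A := Aᵀ) h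

lemma NN_le_of_forall_sum_norm_col_le [NeZero n] {x : ℝ} (h : ∀ j, ∑ i, ‖A i j‖ ≤ x) :
    NN A ≤ x :=
  (min_le_right _ _).trans (ciSup_le h)

end Norms

section Frobenius

variable {n : ℕ} (a : ℕ → ℂ)

lemma sum_norm_col_frob_of_eq_zero {j : Fin n} (hj : (j : ℕ) = 0) :
    ∑ i, ‖Frob n a i j‖ = ‖a j‖ := by
  have hlast : n - 1 < n := by omega
  rw [Finset.sum_eq_single_of_mem ⟨n - 1, hlast⟩ (Finset.mem_univ _)]
  · simp [Frob, hj]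
  · intro i _ hi
    have : (i : ℕ) ≠ n - 1 := fun h => hi (Fin.ext h)
    simp [Frob, hj, this]

lemma sum_norm_col_frob_of_ne_zero {j : Fin n} (hj : (j : ℕ) ≠ 0) :
    ∑ i, ‖Frob n a i j‖ = 1 + ‖a j‖ := by
  have hlast : n - 1 < n := by omega
  have hpred : (j : ℕ) - 1 < n := by omega
  have hne : (⟨(j : ℕ) - 1, hpred⟩ : Fin n) ≠ ⟨n - 1, hlast⟩ := by
    simp only [ne_eq, Fin.mk.injEq]; omega
  rw [Finset.sum_eq_add_of_mem _ _ (Finset.mem_univ _) (Finset.mem_univ _) hne]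
  · have h₁ : (j : ℕ) = j - 1 + 1 := by omega
    have h₂ : (j : ℕ) ≠ n - 1 + 1 := by omega
    simp only [Frob, Matrix.of_apply, if_pos h₁, if_neg h₂, if_true, norm_one, norm_neg]
  · rintro i - ⟨hi₁, hi₂⟩
    have h₁ : (j : ℕ) ≠ i + 1 := fun h => hi₁ (Fin.ext (by simp only; omega))
    have h₂ : (i : ℕ) ≠ n - 1 := fun h => hi₂ (Fin.ext h)
    simp [Frob, h₁, h₂]

end Frobenius

namespace IsUnitSparseData

variable {n m : ℕ} {a : ℕ → ℂ} {C : Matrix (Fin n) (Fin n) ℂ} {r c : Fin n → Fin n}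

lemma exists_apply_eq (hC : IsUnitSparseData n m a C r c) (j : Fin n) :
    ∃ k : Fin n, (k : ℕ) = n - 1 - j ∧ C (r k) (c k) = -a j := by
  obtain ⟨-, -, -, -, hval, -⟩ := hC
  refine ⟨⟨n - 1 - j, by omega⟩, rfl, ?_⟩
  rw [hval, show n - 1 - (n - 1 - (j : ℕ)) = j by omega]

lemma exists_apply_eq_neg_coeff_zero (hC : IsUnitSparseData n m a C r c) :
    ∃ k : Fin n, (r k : ℕ) = n - 1 ∧ (c k : ℕ) = 0 ∧ C (r k) (c k) = -a 0 := by
  obtain ⟨k, hk, hval⟩ := hC.exists_apply_eq ⟨0, by have := hC.1; omega⟩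
  simp only [Nat.sub_zero] at hk
  have hrc := hC.2.1 k
  have := (r k).isLt
  exact ⟨k, by omega, by omega, hval⟩

variable (hC : IsUnitSparseData n m a C r c) (ha : ‖a 0‖ = 1)
include hC ha

lemma exists_norm_eq_one_in_row (k : Fin n) (hk : (k : ℕ) ≠ n - 1) :
    ∃ j, j ≠ c k ∧ ‖C (r k) j‖ = 1 := by
  obtain ⟨k₀, hr₀, hc₀, hval₀⟩ := hC.exists_apply_eq_neg_coeff_zero
  obtain ⟨-, hrc, -, -, -, hsup, -⟩ := hC
  have hrc := hrc k
  have := (r k).isLt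
  by_cases hr : (r k : ℕ) + 1 < n
  · have hsup' := hsup (r k) ⟨r k + 1, hr⟩ rfl
    exact ⟨⟨r k + 1, hr⟩, Fin.ne_of_val_ne (by simp only; omega), by simp [hsup']⟩
  · have hrow : r k₀ = r k := Fin.ext (by omega)
    exact ⟨c k₀, Fin.ne_of_val_ne (by omega), by rw [← hrow, hval₀, norm_neg, ha]⟩

lemma exists_norm_eq_one_in_col (k : Fin n) (hk : (k : ℕ) ≠ n - 1) :
    ∃ i, i ≠ r k ∧ ‖C i (c k)‖ = 1 := by
  obtain ⟨k₀, hr₀, hc₀, hval₀⟩ := hC.exists_apply_eq_neg_coeff_zero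
  obtain ⟨-, hrc, -, -, -, hsup, -⟩ := hC
  have hrc := hrc k
  by_cases hc : (c k : ℕ) = 0
  · have hcol : c k₀ = c k := Fin.ext (by omega)
    exact ⟨r k₀, Fin.ne_of_val_ne (by omega), by rw [← hcol, hval₀, norm_neg, ha]⟩
  · have hpred : (c k : ℕ) - 1 < n := by omega
    have hsup' := hsup ⟨c k - 1, hpred⟩ (c k) (by simp only; omega)
    exact ⟨⟨c k - 1, hpred⟩, Fin.ne_of_val_ne (by simp only; omega), by simp [hsup']⟩

lemma sum_norm_col_frob_le_min (j : Fin n) :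
    ∑ i, ‖Frob n a i j‖ ≤ min (infNorm C) (oneNorm C) := by
  obtain ⟨k, hk, hval⟩ := hC.exists_apply_eq j
  by_cases hj : (j : ℕ) = 0
  · rw [sum_norm_col_frob_of_eq_zero a hj, ← norm_neg, ← hval]
    exact le_min (norm_le_infNorm _ _) (norm_le_oneNorm _ _)
  · have hk' : (k : ℕ) ≠ n - 1 := by omega
    obtain ⟨j', hj', hrow⟩ := hC.exists_norm_eq_one_in_row ha k hk'
    obtain ⟨i', hi', hcol⟩ := hC.exists_norm_eq_one_in_col ha k hk'
    rw [sum_norm_col_frob_of_ne_zero a hj, ← norm_neg (a j), ← hval]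
    refine le_min ?_ ?_
    · simpa [hrow, add_comm] using add_norm_le_infNorm (A := C) (i := r k) hj'.symm
    · simpa [hcol, add_comm] using add_norm_le_oneNorm (A := C) (j := c k) hi'.symm

lemma NN_frob_le : NN (Frob n a) ≤ NN C :=
  haveI : NeZero n := ⟨by have := hC.1; omega⟩
  NN_le_of_forall_sum_norm_col_le (hC.sum_norm_col_frob_le_min ha)

end IsUnitSparseData

theorem stmt10_general (n : ℕ) (a : ℕ → ℂ) (ha : ‖a 0‖ = 1) :
    (∀ C : Matrix (Fin n) (Fin n) ℂ, IsUnitSparse n a C →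
      NN (Frob n a) ≤ NN C) ∧
    (∀ D : Matrix (Fin n) (Fin n) ℂ, IsUnitSparse n (asharp n a) D →
      NN (Frob n (asharp n a)) ≤ NN D) := by
  have hsharp : ‖asharp n a 0‖ = 1 := by simp [asharp, ha]
  exact ⟨fun _ ⟨_, _, _, hC⟩ => hC.NN_frob_le ha,
    fun _ ⟨_, _, _, hD⟩ => hD.NN_frob_le hsharp⟩

/-- if `|a_0| = 1` then `N(F(p)) ≤ N(C)` for every unit sparse
companion matrix `C` of `p`, and `N(F(p♯)) ≤ N(D)` for every unit sparse companion
matrix `D` of the monic reversal polynomial `p♯`. -/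
theorem stmt10 (n : ℕ) (hn : 2 ≤ n) (a : ℕ → ℂ) (ha : ‖a 0‖ = 1) :
    (∀ C : Matrix (Fin n) (Fin n) ℂ, IsUnitSparse n a C →
      NN (Frob n a) ≤ NN C) ∧
    (∀ D : Matrix (Fin n) (Fin n) ℂ, IsUnitSparse n (asharp n a) D →
      NN (Frob n (asharp n a)) ≤ NN D) :=
  stmt10_general n a ha

end
end
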